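/- arXiv:1802.02469 — 2 statements merged into one kernel-verified Lean document; each statement's English description precedes it below -/
import Mathlib

section
/- For every pure unit quaternion μ and all real numbers α and φ, there exists a unitary matrix U in U(2) over the complex numbers such that for all (z₁, z₂) ∈ ℂ², Φ(U·(z₁, z₂)) = exp(μ·α/2) · Φ(z₁, z₂) · exp(j·φ), where exp is the quaternion exponential. -/
open Quaternion MeasureTheory

noncomputable section

/-- The imaginary unit `i` of the quaternions. -/
def qi : ℍ[ℝ] := ⟨0, 1, 0, 0⟩

/-- The imaginary unit `j` of the quaternions. -/
def qj : ℍ[ℝ] := ⟨0, 0, 1, 0⟩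

/-- The embedding `ι : ℂ → ℍ` sending `a + b·√(−1)` to `a + b·j`. -/
def iotaC (z : ℂ) : ℍ[ℝ] := ⟨z.re, 0, z.im, 0⟩

/-- The identification `Φ : ℂ² → ℍ`, `Φ(z₁, z₂) = ι(z₁) + i·ι(z₂)`. -/
def PhiMap (z : Fin 2 → ℂ) : ℍ[ℝ] := iotaC (z 0) + qi * iotaC (z 1)

/-- A quaternion is a pure unit quaternion if its real part is `0` and its modulus is `1`. -/
def IsPureUnit (μ : ℍ[ℝ]) : Prop := μ.re = 0 ∧ ‖μ‖ = 1

/-- The quaternion exponential. -/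
def qexp (q : ℍ[ℝ]) : ℍ[ℝ] := NormedSpace.exp q

/-- The Euclidean inner product on `ℍ ≅ ℝ⁴`: `⟨p, q⟩` is the real part of `p·q̄`. -/
def qinner (p q : ℍ[ℝ]) : ℝ := (p * star q).re

/-!
`Φ` turns multiplication by a complex scalar `w` into right multiplication by `ι(w)`, so left
multiplication by any quaternion `p` is complex linear on `ℂ²`; in coordinates it is the matrix
`[[u, -v̄], [v, ū]]` with `p = Φ(u, v)`, which is unitary when `|p| = 1`. The left factor
`exp(μα/2)` has norm `1` because its exponent has real part `0`, and the right factor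
`exp(jφ) = ι(exp(iφ))`, as `ι` is a continuous algebra map, is right multiplication by the unit
scalar `exp(iφ)`. Hence `U = exp(iφ) · [[u, -v̄], [v, ū]]`.
-/

@[simp] lemma re_iotaC (z : ℂ) : (iotaC z).re = z.re := rfl
@[simp] lemma imI_iotaC (z : ℂ) : (iotaC z).imI = 0 := rfl
@[simp] lemma imJ_iotaC (z : ℂ) : (iotaC z).imJ = z.im := rfl
@[simp] lemma imK_iotaC (z : ℂ) : (iotaC z).imK = 0 := rfl

@[simp] lemma re_qi : qi.re = 0 := rfl
@[simp] lemma imI_qi : qi.imI = 1 := rfl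
@[simp] lemma imJ_qi : qi.imJ = 0 := rfl
@[simp] lemma imK_qi : qi.imK = 0 := rfl

@[simp] lemma re_qj : qj.re = 0 := rfl
@[simp] lemma imI_qj : qj.imI = 0 := rfl
@[simp] lemma imJ_qj : qj.imJ = 1 := rfl
@[simp] lemma imK_qj : qj.imK = 0 := rfl

def iotaCAlgHom : ℂ →ₐ[ℝ] ℍ[ℝ] where
  toFun := iotaC
  map_one' := by ext <;> simp
  map_mul' z w := by
    ext <;> simp [Quaternion.re_mul, Quaternion.imI_mul, Quaternion.imJ_mul, Quaternion.imK_mul]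
  map_zero' := by ext <;> simp
  map_add' z w := by ext <;> simp
  commutes' r := by ext <;> simp

lemma qexp_iotaC (z : ℂ) : qexp (iotaC z) = iotaC (Complex.exp z) := by
  rw [Complex.exp_eq_exp_ℂ, qexp]
  exact (NormedSpace.map_exp iotaCAlgHom
    iotaCAlgHom.toLinearMap.continuous_of_finiteDimensional z).symm

lemma iotaC_ofReal_mul_I (t : ℝ) : iotaC (t * Complex.I) = qj * (t : ℍ[ℝ]) := by
  rw [Quaternion.mul_coe_eq_smul]
  ext <;> simp

lemma norm_qexp_of_re_eq_zero {q : ℍ[ℝ]} (hq : q.re = 0) : ‖qexp q‖ = 1 := by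
  rw [qexp, Quaternion.norm_exp, hq, NormedSpace.exp_zero, norm_one]

lemma PhiMap_smul (w : ℂ) (z : Fin 2 → ℂ) : PhiMap (w • z) = PhiMap z * iotaC w := by
  ext <;>
    simp only [PhiMap, Pi.smul_apply, smul_eq_mul, Complex.mul_re, Complex.mul_im,
      Quaternion.re_add, Quaternion.imI_add, Quaternion.imJ_add, Quaternion.imK_add,
      Quaternion.re_mul, Quaternion.imI_mul, Quaternion.imJ_mul, Quaternion.imK_mul,
      re_iotaC, imI_iotaC, imJ_iotaC, imK_iotaC, re_qi, imI_qi, imJ_qi, imK_qi] <;>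
    ring

/-- The entries are `u, v` with `p = Φ(u, v)`; the shape of the matrix comes from
`ι(w) · i = i · ι(w̄)`. -/
def qleftMulMatrix (p : ℍ[ℝ]) : Matrix (Fin 2) (Fin 2) ℂ :=
  !![⟨p.re, p.imJ⟩, -star (⟨p.imI, p.imK⟩ : ℂ); ⟨p.imI, p.imK⟩, star (⟨p.re, p.imJ⟩ : ℂ)]

lemma PhiMap_qleftMulMatrix_mulVec (p : ℍ[ℝ]) (z : Fin 2 → ℂ) :
    PhiMap ((qleftMulMatrix p).mulVec z) = p * PhiMap z := by
  ext <;>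
    simp only [PhiMap, qleftMulMatrix, Matrix.mulVec, dotProduct, Fin.sum_univ_two,
      Matrix.of_apply, Matrix.cons_val', Matrix.cons_val_zero, Matrix.cons_val_one,
      Matrix.cons_val_fin_one, Complex.star_def, Complex.conj_re, Complex.conj_im, Complex.neg_re,
      Complex.neg_im, Complex.add_re, Complex.add_im, Complex.mul_re, Complex.mul_im,
      Quaternion.re_add, Quaternion.imI_add, Quaternion.imJ_add, Quaternion.imK_add,
      Quaternion.re_mul, Quaternion.imI_mul, Quaternion.imJ_mul, Quaternion.imK_mul,
      re_iotaC, imI_iotaC, imJ_iotaC, imK_iotaC, re_qi, imI_qi, imJ_qi, imK_qi] <;>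
    ring

lemma Matrix.of_mem_unitaryGroup_fin_two {R : Type*} [CommRing R] [StarRing R] {u v : R}
    (h : star u * u + star v * v = 1) :
    !![u, -star v; v, star u] ∈ Matrix.unitaryGroup (Fin 2) R := by
  rw [Matrix.mem_unitaryGroup_iff']
  ext i j
  fin_cases i <;> fin_cases j <;> simp [Matrix.mul_apply]
  · exact h
  · ring
  · ring
  · linear_combination h

lemma qleftMulMatrix_mem_unitaryGroup {p : ℍ[ℝ]} (hp : ‖p‖ = 1) :
    qleftMulMatrix p ∈ Matrix.unitaryGroup (Fin 2) ℂ := by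
  refine Matrix.of_mem_unitaryGroup_fin_two ?_
  have h : p.re ^ 2 + p.imI ^ 2 + p.imJ ^ 2 + p.imK ^ 2 = 1 := by
    rw [← Quaternion.normSq_def', Quaternion.normSq_eq_norm_mul_self, hp, mul_one]
  apply Complex.ext <;> simp
  · linear_combination h
  · ring

lemma Complex.exp_ofReal_mul_I_mem_unitary (t : ℝ) :
    Complex.exp (t * Complex.I) ∈ unitary ℂ := by
  rw [Unitary.mem_iff_star_mul_self, Complex.star_def, ← Complex.exp_conj, ← Complex.exp_add]
  simp

/-- For every pure unit quaternion `μ` and reals `α`, `φ`, the map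
`X ↦ exp(μ·α/2)·X·exp(j·φ)` on `ℍ ≅ ℂ²` is realized by some `U ∈ U(2)`. -/
theorem quaternion_to_unitary (μ : ℍ[ℝ]) (hμ : IsPureUnit μ) (α φ : ℝ) :
    ∃ U ∈ Matrix.unitaryGroup (Fin 2) ℂ,
      ∀ z : Fin 2 → ℂ,
        PhiMap (U.mulVec z) =
          qexp (μ * ((α / 2 : ℝ) : ℍ[ℝ])) * PhiMap z * qexp (qj * ((φ : ℝ) : ℍ[ℝ])) := by
  set p := qexp (μ * ((α / 2 : ℝ) : ℍ[ℝ]))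
  have hp : ‖p‖ = 1 := norm_qexp_of_re_eq_zero <| by
    rw [Quaternion.mul_coe_eq_smul, Quaternion.re_smul, hμ.1, smul_zero]
  refine ⟨Complex.exp (φ * Complex.I) • qleftMulMatrix p,
    Unitary.smul_mem_of_mem (Complex.exp_ofReal_mul_I_mem_unitary φ)
      (qleftMulMatrix_mem_unitaryGroup hp), fun z => ?_⟩
  rw [Matrix.smul_mulVec, PhiMap_smul, PhiMap_qleftMulMatrix_mulVec, ← iotaC_ofReal_mul_I,
    qexp_iotaC]
end
end

section
/- Let H be a Hermitian positive semidefinite 2×2 complex matrix with eigenvalues λ₁ ≥ λ₂ ≥ 0. Then there exists a pure unit quaternion μ such that for all (z₁, z₂) ∈ ℂ², Φ(H·(z₁, z₂)) = ((λ₁ + λ₂)/2)·Φ(z₁, z₂) − ((λ₁ − λ₂)/2)·μ·Φ(z₁, z₂)·j; that is, in the Hermitian quaternion filter form Y = K·(X − η·μ·X·j) one can take homogeneous gain K = (λ₁ + λ₂)/2 and, when K > 0, polarizing power η = (λ₁ − λ₂)/(λ₁ + λ₂). -/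
/-! Writing `H = [[a, b], [b̄, c]]`, a direct computation gives `Φ(H z) = K·Φ(z) + q·Φ(z)·j` with
`K = (a + c)/2 = tr H / 2` and `q` the pure quaternion with imaginary components
`(−Im b, (c − a)/2, −Re b)`. Its squared norm is `K² − det H = ((λ₁ + λ₂)/2)² − λ₁λ₂ = ((λ₁ − λ₂)/2)²`,
so `q = −((λ₁ − λ₂)/2)·μ` for a pure unit quaternion `μ` (an arbitrary one when `λ₁ = λ₂`). -/

open Quaternion MeasureTheory
open scoped ComplexOrder

noncomputable section

lemma Matrix.IsHermitian.im_apply_self {n : Type*} {A : Matrix n n ℂ} (hA : A.IsHermitian) (i : n) :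
    (A i i).im = 0 :=
  Complex.conj_eq_iff_im.mp (hA.apply i i)

def polarizationQuaternion (H : Matrix (Fin 2) (Fin 2) ℂ) : ℍ[ℝ] :=
  ⟨0, -(H 0 1).im, ((H 1 1).re - (H 0 0).re) / 2, -(H 0 1).re⟩

section Hermitian

variable {H : Matrix (Fin 2) (Fin 2) ℂ}

lemma PhiMap_mulVec_of_isHermitian (hH : H.IsHermitian) (z : Fin 2 → ℂ) :
    PhiMap (H.mulVec z) =
      ((H.trace.re / 2 : ℝ) : ℍ[ℝ]) * PhiMap z + polarizationQuaternion H * PhiMap z * qj := by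
  ext <;>
    simp only [PhiMap, Quaternion.re_add, Quaternion.imI_add, Quaternion.imJ_add,
      Quaternion.imK_add, Quaternion.re_mul, Quaternion.imI_mul, Quaternion.imJ_mul,
      Quaternion.imK_mul, Quaternion.re_coe, Quaternion.imI_coe, Quaternion.imJ_coe,
      Quaternion.imK_coe] <;>
    simp [iotaC, qi, qj, polarizationQuaternion, Matrix.mulVec, dotProduct, Matrix.trace_fin_two,
      hH.im_apply_self, ← hH.apply 1 0] <;>
    ring

lemma normSq_polarizationQuaternion (hH : H.IsHermitian) :
    normSq (polarizationQuaternion H) = (H.trace.re / 2) ^ 2 - H.det.re := by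
  rw [Quaternion.normSq_def']
  simp [polarizationQuaternion, Matrix.trace_fin_two, Matrix.det_fin_two, hH.im_apply_self,
    ← hH.apply 1 0]
  ring

end Hermitian

namespace Matrix.IsHermitian

variable {𝕜 n : Type*} [RCLike 𝕜] [Fintype n] [DecidableEq n] {A : Matrix n n 𝕜}

lemma trace_eq_sum_of_eigenvalues_eq (hA : A.IsHermitian) {s : Multiset ℝ}
    (hs : s = Finset.univ.val.map hA.eigenvalues) : A.trace = (s.sum : 𝕜) := by
  simp [hA.trace_eq_sum_eigenvalues, hs]

lemma det_eq_prod_of_eigenvalues_eq (hA : A.IsHermitian) {s : Multiset ℝ}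
    (hs : s = Finset.univ.val.map hA.eigenvalues) : A.det = (s.prod : 𝕜) := by
  simp [hA.det_eq_prod_eigenvalues, hs]

end Matrix.IsHermitian

lemma isPureUnit_qi : IsPureUnit qi := by
  refine ⟨rfl, ?_⟩
  have h : ‖qi‖ * ‖qi‖ = 1 := by rw [← normSq_eq_norm_mul_self, Quaternion.normSq_def']; simp [qi]
  nlinarith [norm_nonneg qi]

lemma exists_isPureUnit_coe_mul_eq {q : ℍ[ℝ]} {d : ℝ} (hq : q.re = 0) (hd : normSq q = d ^ 2) :
    ∃ μ, IsPureUnit μ ∧ (d : ℍ[ℝ]) * μ = q := by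
  have hnorm : ‖q‖ = |d| := by
    rw [← Real.sqrt_sq_eq_abs, ← hd, normSq_eq_norm_mul_self, Real.sqrt_mul_self (norm_nonneg q)]
  rcases eq_or_ne d 0 with rfl | hd0
  · refine ⟨qi, isPureUnit_qi, ?_⟩
    simpa [eq_comm] using hnorm
  · refine ⟨d⁻¹ • q, ⟨by simp [hq], ?_⟩, ?_⟩
    · rw [norm_smul, hnorm, norm_inv, Real.norm_eq_abs, inv_mul_cancel₀ (abs_ne_zero.mpr hd0)]
    · rw [coe_mul_eq_smul, smul_smul, mul_inv_cancel₀ hd0, one_smul]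

theorem hermitian_eigenvalue_parameters_general (H : Matrix (Fin 2) (Fin 2) ℂ) (hH : H.PosSemidef)
    (lam₁ lam₂ : ℝ)
    (heig : ({lam₁, lam₂} : Multiset ℝ) = Finset.univ.val.map hH.1.eigenvalues) :
    ∃ μ : ℍ[ℝ], IsPureUnit μ ∧
      ∀ z : Fin 2 → ℂ,
        PhiMap (H.mulVec z) =
          (((lam₁ + lam₂) / 2 : ℝ) : ℍ[ℝ]) * PhiMap z
            - (((lam₁ - lam₂) / 2 : ℝ) : ℍ[ℝ]) * (μ * PhiMap z * qj) := by
  have htrace : H.trace.re = lam₁ + lam₂ := by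
    simp [hH.1.trace_eq_sum_of_eigenvalues_eq heig]
  have hdet : H.det.re = lam₁ * lam₂ := by
    simp [hH.1.det_eq_prod_of_eigenvalues_eq heig]
  obtain ⟨μ, hμ, hdμ⟩ := exists_isPureUnit_coe_mul_eq (d := (lam₁ - lam₂) / 2)
    (q := -polarizationQuaternion H) (by rw [Quaternion.re_neg, neg_eq_zero]; rfl) (by
      rw [normSq_neg, normSq_polarizationQuaternion hH.1, htrace, hdet]; ring)
  refine ⟨μ, hμ, fun z => ?_⟩
  rw [PhiMap_mulVec_of_isHermitian hH.1, htrace, ← mul_assoc, ← mul_assoc, hdμ]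
  noncomm_ring

/-- A Hermitian PSD matrix with eigenvalues `λ₁ ≥ λ₂ ≥ 0` acts on `ℍ ≅ ℂ²` as
`X ↦ ((λ₁+λ₂)/2)·X − ((λ₁−λ₂)/2)·μ·X·j` for some pure unit quaternion `μ`,
i.e. with homogeneous gain `K = (λ₁+λ₂)/2` and polarizing power `η = (λ₁−λ₂)/(λ₁+λ₂)`. -/
theorem hermitian_eigenvalue_parameters (H : Matrix (Fin 2) (Fin 2) ℂ) (hH : H.PosSemidef)
    (lam₁ lam₂ : ℝ) (hle : lam₂ ≤ lam₁) (h0 : 0 ≤ lam₂)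
    (heig : ({lam₁, lam₂} : Multiset ℝ) = Finset.univ.val.map hH.1.eigenvalues) :
    ∃ μ : ℍ[ℝ], IsPureUnit μ ∧
      ∀ z : Fin 2 → ℂ,
        PhiMap (H.mulVec z) =
          (((lam₁ + lam₂) / 2 : ℝ) : ℍ[ℝ]) * PhiMap z
            - (((lam₁ - lam₂) / 2 : ℝ) : ℍ[ℝ]) * (μ * PhiMap z * qj) :=
  hermitian_eigenvalue_parameters_general H hH lam₁ lam₂ heig
end
end
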